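/- There is no unitary operator U on ℂ² ⊗ ℂ² ⊗ ℂ² together with a family of complex numbers c_φ satisfying 0 < |c_φ| ≤ 1 such that for every unit vector φ ∈ ℂ², applying the linear functional ⟨e₀|·⟩ to the third tensor factor of U(φ ⊗ e₀ ⊗ e₀) yields c_φ • (φ ⊗ φ) ∈ ℂ² ⊗ ℂ²; i.e., (id ⊗ id ⊗ ⟨e₀|) U(φ ⊗ e₀ ⊗ e₀) = c_φ • (φ ⊗ φ) is impossible for all unit φ. -/

import Mathlib

/-- The qubit state `|0⟩ = (1,0)` in `ℂ²`. -/
noncomputable def e0 : EuclideanSpace ℂ (Fin 2) := EuclideanSpace.single 0 1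

/-- The tensor product of two qubit states, realized concretely via the canonical
Hilbert-space isomorphism `ℂ² ⊗ ℂ² ≅ ℂ^(2×2)` (Kronecker product of coordinates). -/
noncomputable def tmul2 (x y : EuclideanSpace ℂ (Fin 2)) :
    EuclideanSpace ℂ (Fin 2 × Fin 2) :=
  (WithLp.equiv 2 _).symm fun p => x p.1 * y p.2

/-- The tensor product of three qubit states, realized concretely via the canonical
Hilbert-space isomorphism `ℂ² ⊗ ℂ² ⊗ ℂ² ≅ ℂ^(2×2×2)`. -/
noncomputable def tmul3 (x y z : EuclideanSpace ℂ (Fin 2)) :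
    EuclideanSpace ℂ (Fin 2 × Fin 2 × Fin 2) :=
  (WithLp.equiv 2 _).symm fun p => x p.1 * y p.2.1 * z p.2.2

/-- The partial projection `(id ⊗ id ⊗ ⟨g|) : ℂ² ⊗ ℂ² ⊗ ℂ² → ℂ² ⊗ ℂ²`: applying the
linear functional `x ↦ ⟨g, x⟩` to the third tensor factor.  On pure tensors it sends
`x ⊗ y ⊗ z` to `⟨g, z⟩ • (x ⊗ y)`. -/
noncomputable def projThird (g : EuclideanSpace ℂ (Fin 2))
    (w : EuclideanSpace ℂ (Fin 2 × Fin 2 × Fin 2)) :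
    EuclideanSpace ℂ (Fin 2 × Fin 2) :=
  (WithLp.equiv 2 _).symm fun p => ∑ k : Fin 2, (starRingEnd ℂ) (g k) * w (p.1, p.2, k)


noncomputable def e1 : EuclideanSpace ℂ (Fin 2) := EuclideanSpace.single 1 1

lemma e0_apply (i : Fin 2) : e0 i = if i = 0 then 1 else 0 := by
  simp [e0, EuclideanSpace.single_apply, eq_comm]

lemma e1_apply (i : Fin 2) : e1 i = if i = 1 then 1 else 0 := by
  simp [e1, EuclideanSpace.single_apply, eq_comm]

lemma proj_apply (w : EuclideanSpace ℂ (Fin 2 × Fin 2 × Fin 2)) :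
    projThird e0 w (0, 1) = w (0, 1, 0) := by
  simp [projThird, Fin.sum_univ_two, e0_apply]

/-- **No-cloning theorem for 2WQC (single-qubit version).**
There is no unitary operator `U` on `ℂ² ⊗ ℂ² ⊗ ℂ²` together with complex amplitudes
`c φ` with `0 < |c φ| ≤ 1` such that projecting the third factor of
`U (φ ⊗ e₀ ⊗ e₀)` onto `⟨e₀|` yields `c φ • (φ ⊗ φ)` for every unit vector `φ`. -/
theorem no_cloning_2WQC_qubit :
    ¬ ∃ (U : EuclideanSpace ℂ (Fin 2 × Fin 2 × Fin 2) ≃ₗᵢ[ℂ]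
          EuclideanSpace ℂ (Fin 2 × Fin 2 × Fin 2))
        (c : EuclideanSpace ℂ (Fin 2) → ℂ),
      (∀ φ : EuclideanSpace ℂ (Fin 2), ‖φ‖ = 1 →
          0 < ‖c φ‖ ∧ ‖c φ‖ ≤ 1) ∧
      (∀ φ : EuclideanSpace ℂ (Fin 2), ‖φ‖ = 1 →
          projThird e0 (U (tmul3 φ e0 e0)) = c φ • tmul2 φ φ) := by
  rintro ⟨U, c, hc, hclone⟩
  set χ : EuclideanSpace ℂ (Fin 2) := ((Real.sqrt 2 : ℂ))⁻¹ • (e0 + e1) with hχdef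
  have hs2 : (Real.sqrt 2 : ℂ) ≠ 0 := by
    simp [Real.sqrt_eq_zero']
  have hχcoord : ∀ i : Fin 2, χ i = (Real.sqrt 2 : ℂ)⁻¹ := by
    intro i
    fin_cases i <;> simp [hχdef, e0_apply, e1_apply]
  have he0 : ‖e0‖ = 1 := by simp [e0]
  have he1 : ‖e1‖ = 1 := by simp [e1]
  have hχ : ‖χ‖ = 1 := by
    rw [EuclideanSpace.norm_eq]
    rw [Fin.sum_univ_two, hχcoord 0, hχcoord 1]
    rw [show ‖((Real.sqrt 2:ℝ):ℂ)⁻¹‖ = (Real.sqrt 2)⁻¹ by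
      rw [norm_inv, Complex.norm_real, Real.norm_eq_abs, abs_of_nonneg (Real.sqrt_nonneg 2)]]
    rw [show ((Real.sqrt 2)⁻¹)^2 + ((Real.sqrt 2)⁻¹)^2 = (1:ℝ) by
      rw [← two_mul]
      rw [inv_pow, Real.sq_sqrt (by norm_num : (2:ℝ) ≥ 0)]
      norm_num]
    exact Real.sqrt_one
  have hlin : tmul3 χ e0 e0 =
      (Real.sqrt 2 : ℂ)⁻¹ • (tmul3 e0 e0 e0 + tmul3 e1 e0 e0) := by
    ext ⟨i, j, k⟩
    fin_cases i <;>
      simp [tmul3, WithLp.equiv_symm_apply, PiLp.smul_apply, PiLp.add_apply,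
        smul_eq_mul, hχcoord, e0_apply, e1_apply] <;> ring
  have hU : U (tmul3 χ e0 e0) =
      (Real.sqrt 2 : ℂ)⁻¹ • (U (tmul3 e0 e0 e0) + U (tmul3 e1 e0 e0)) := by
    rw [hlin, map_smul, map_add]
  have h0 := hclone e0 he0
  have h1 := hclone e1 he1
  have h2 := hclone χ hχ
  have v0 : U (tmul3 e0 e0 e0) (0,1,0) = 0 := by
    have := congrArg (fun v => v (0,1)) h0
    simp only [proj_apply] at this
    rw [this]
    simp [tmul2, e0_apply]
  have v1 : U (tmul3 e1 e0 e0) (0,1,0) = 0 := by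
    have := congrArg (fun v => v (0,1)) h1
    simp only [proj_apply] at this
    rw [this]
    simp [tmul2, e1_apply]
  have v2 : U (tmul3 χ e0 e0) (0,1,0) = c χ * (2:ℂ)⁻¹ := by
    have := congrArg (fun v => v (0,1)) h2
    simp only [proj_apply] at this
    rw [this]
    simp only [PiLp.smul_apply, tmul2, WithLp.equiv_symm_apply, WithLp.ofLp_toLp, smul_eq_mul, hχcoord]
    rw [← mul_inv, ← Complex.ofReal_mul, Real.mul_self_sqrt (by norm_num : (0:ℝ) ≤ 2)]
    norm_num
  have := congrArg (fun v => v (0,1,0)) hU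
  simp only [PiLp.smul_apply, PiLp.add_apply, v0, v1, v2, smul_eq_mul] at this
  have hcz : c χ = 0 := by
    field_simp at this
    rw [mul_zero, zero_mul] at this
    exact (mul_eq_zero.mp this).resolve_right hs2
  have := (hc χ hχ).1
  rw [hcz] at this
  simp at this
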